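/- arXiv:2107.08595 — 2 statements merged into one kernel-verified Lean document; each statement's English description precedes it below -/
import Mathlib

section
/- Tridiagonal inverse for one-dimensional tensor Markov kernel matrices: let k(x,x') = p(x∧x')q(x∨x') with p, q positive on an interval and p/q strictly increasing, and let x_1 < ⋯ < x_n be design points with K_{ij} = k(x_i, x_j). Then K is invertible and K^{-1} is tridiagonal, with entries (K^{-1})_{i,i} = (p_{i+1}q_{i-1} − p_{i-1}q_{i+1}) / [(p_i q_{i-1} − p_{i-1}q_i)(p_{i+1}q_i − p_i q_{i+1})] and (K^{-1})_{i,i+1} = (K^{-1})_{i+1,i} = −1/(p_{i+1}q_i − p_i q_{i+1}), where p_i = p(x_i), q_i = q(x_i), with conventions p_0 = q_{n+1} = 0 and p_{n+1} = q_0 = 1. -/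
/-!
Write `W k = P (k+1) Q k - P k Q (k+1)` for the discrete Wronskian of the padded sequences
`P = (0, p₁, …, pₙ, 1)` and `Q = (1, q₁, …, qₙ, 0)`; monotonicity of `p/q` makes every `W k`
positive. The columns of the tridiagonal matrix are the coefficients of the three-term recurrence
solved by both `P` and `Q`. Row `i` of `K` is `P i • Q` to the right of the diagonal and
`Q i • P` to the left, so its product with column `j ≠ i` vanishes, while on the diagonal it is
`W i / W i = 1`. The padding values `P 0 = 0` and `Q (n+1) = 0` let the boundary columns follow
the same pattern.
-/

open Finset

namespace TensorMarkov

variable {𝕜 : Type*} [Field 𝕜] (P Q : ℕ → 𝕜)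

def wronskian (k : ℕ) : 𝕜 := P (k + 1) * Q k - P k * Q (k + 1)

def tridiagDiag (k : ℕ) : 𝕜 :=
  (P (k + 2) * Q k - P k * Q (k + 2)) / (wronskian P Q k * wronskian P Q (k + 1))

-- Matrix indices `l, j` are `0`-based, the sequences `P, Q` are `1`-based.
def tridiag (l j : ℕ) : 𝕜 :=
  if l = j then tridiagDiag P Q l
  else if l + 1 = j ∨ j + 1 = l then -1 / wronskian P Q (min l j + 1) else 0

def kernel (a b : ℕ) : 𝕜 := P (min a b) * Q (max a b)

variable {P Q}

lemma kernel_of_le {a b : ℕ} (h : a ≤ b) : kernel P Q a b = P a * Q b := by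
  rw [kernel, min_eq_left h, max_eq_right h]

lemma kernel_of_ge {a b : ℕ} (h : b ≤ a) : kernel P Q a b = P b * Q a := by
  rw [kernel, min_eq_right h, max_eq_left h]

lemma tridiag_eq_add (l j : ℕ) :
    tridiag P Q l j = (if l + 1 = j then -1 / wronskian P Q j else 0) +
      (if l = j then tridiagDiag P Q j else 0) +
      (if l = j + 1 then -1 / wronskian P Q (j + 1) else 0) := by
  rcases (by omega : l + 1 = j ∨ l = j ∨ l = j + 1 ∨ (l + 1 ≠ j ∧ l ≠ j ∧ l ≠ j + 1)) with
    rfl | rfl | rfl | ⟨h₁, h₂, h₃⟩ <;> simp [tridiag, *] <;> omega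

lemma sum_range_mul_tridiag (u : ℕ → 𝕜) {n j : ℕ} (hj : j < n) (hu₀ : u 0 = 0)
    (hun : u (n + 1) = 0) :
    ∑ l ∈ range n, u (l + 1) * tridiag P Q l j =
      -u j / wronskian P Q j + u (j + 1) * tridiagDiag P Q j
        - u (j + 2) / wronskian P Q (j + 1) := by
  simp only [tridiag_eq_add, mul_add, sum_add_distrib, mul_ite, mul_zero]
  rw [sum_ite_eq', sum_ite_eq', if_pos (mem_range.2 hj)]
  have h_left : (∑ l ∈ range n, if l + 1 = j then u (l + 1) * (-1 / wronskian P Q j) else 0) =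
      -u j / wronskian P Q j := by
    rcases j with _ | m
    · simp [hu₀]
    · simp only [Nat.add_right_cancel_iff, sum_ite_eq', mem_range, if_pos (by omega : m < n)]
      ring
  have h_right : (if j + 1 ∈ range n then u (j + 1 + 1) * (-1 / wronskian P Q (j + 1)) else 0) =
      -u (j + 2) / wronskian P Q (j + 1) := by
    rcases lt_or_eq_of_le (Nat.succ_le_of_lt hj) with h | h
    · rw [if_pos (mem_range.2 h)]
      ring
    · subst h
      simp [hun]
  rw [h_left, h_right]
  ring

lemma three_term_fst {j : ℕ} (h₀ : wronskian P Q j ≠ 0) (h₁ : wronskian P Q (j + 1) ≠ 0) :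
    P j / wronskian P Q j - P (j + 1) * tridiagDiag P Q j
      + P (j + 2) / wronskian P Q (j + 1) = 0 := by
  unfold tridiagDiag
  field_simp
  unfold wronskian
  ring

lemma three_term_snd {j : ℕ} (h₀ : wronskian P Q j ≠ 0) (h₁ : wronskian P Q (j + 1) ≠ 0) :
    Q j / wronskian P Q j - Q (j + 1) * tridiagDiag P Q j
      + Q (j + 2) / wronskian P Q (j + 1) = 0 := by
  unfold tridiagDiag
  field_simp
  unfold wronskian
  ring

lemma sum_kernel_mul_tridiag {n i j : ℕ} (hi : i < n) (hj : j < n) (hP : P 0 = 0)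
    (hQ : Q (n + 1) = 0) (hW : ∀ k ≤ n, wronskian P Q k ≠ 0) :
    ∑ l ∈ range n, kernel P Q (i + 1) (l + 1) * tridiag P Q l j = if i = j then 1 else 0 := by
  rw [sum_range_mul_tridiag (kernel P Q (i + 1)) hj (by simp [kernel, hP])
    (by simp [kernel_of_le (by omega : i + 1 ≤ n + 1), hQ])]
  have h₀ := hW j (by omega)
  have h₁ := hW (j + 1) (by omega)
  rcases lt_trichotomy i j with h | rfl | h
  · rw [kernel_of_le (by omega), kernel_of_le (by omega), kernel_of_le (by omega), if_neg h.ne]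
    linear_combination (-P (i + 1)) * three_term_snd h₀ h₁
  · rw [kernel_of_ge (by omega), kernel_of_le (by omega), kernel_of_le (by omega), if_pos rfl]
    unfold tridiagDiag
    field_simp
    unfold wronskian
    ring
  · rw [kernel_of_ge (by omega), kernel_of_ge (by omega), kernel_of_ge (by omega), if_neg h.ne']
    linear_combination (-Q (i + 1)) * three_term_fst h₀ h₁

theorem kernelMatrix_mul_tridiagMatrix {n : ℕ} (hP : P 0 = 0) (hQ : Q (n + 1) = 0)
    (hW : ∀ k ≤ n, wronskian P Q k ≠ 0) :
    (Matrix.of fun i j : Fin n => kernel P Q (i + 1) (j + 1)) *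
      Matrix.of (fun i j : Fin n => tridiag P Q i j) = 1 := by
  ext i j
  simp only [Matrix.mul_apply, Matrix.of_apply, Matrix.one_apply]
  rw [Fin.sum_univ_eq_sum_range (fun l => kernel P Q (i + 1) (l + 1) * tridiag P Q l j),
    sum_kernel_mul_tridiag i.2 j.2 hP hQ hW]
  simp only [Fin.val_inj]

def extendByEnds {α : Type*} {n : ℕ} (a b : α) (f : Fin n → α) (k : ℕ) : α :=
  if h : 1 ≤ k ∧ k ≤ n then f ⟨k - 1, Nat.sub_one_lt_of_le h.1 h.2⟩
  else if k = 0 then a else b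

section extendByEnds

variable {α : Type*} {n : ℕ} {a b : α} {f : Fin n → α}

@[simp] lemma extendByEnds_zero : extendByEnds a b f 0 = a := by simp [extendByEnds]

@[simp] lemma extendByEnds_last : extendByEnds a b f (n + 1) = b := by simp [extendByEnds]

lemma extendByEnds_succ {k : ℕ} (hk : k < n) : extendByEnds a b f (k + 1) = f ⟨k, hk⟩ := by
  simp [extendByEnds, Nat.succ_le_of_lt hk]

end extendByEnds

lemma kernel_extendByEnds {n : ℕ} {a b a' b' : 𝕜} {f g : Fin n → 𝕜} (i j : Fin n) :
    kernel (extendByEnds a b f) (extendByEnds a' b' g) (i + 1) (j + 1) =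
      f (min i j) * g (max i j) := by
  rw [kernel, Nat.add_min_add_right, Nat.add_max_add_right, extendByEnds_succ, extendByEnds_succ]
  rfl

lemma wronskian_extendByEnds_pos [LinearOrder 𝕜] [IsStrictOrderedRing 𝕜] {n : ℕ}
    {f g : Fin n → 𝕜} (hf : ∀ i, 0 < f i) (hg : ∀ i, 0 < g i)
    (hfg : ∀ i j, i < j → f i / g i < f j / g j) {k : ℕ} (hk : k ≤ n) :
    0 < wronskian (extendByEnds 0 1 f) (extendByEnds 1 0 g) k := by
  rcases k with _ | m
  · rcases n with _ | n
    · simp [wronskian]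
    · simpa [wronskian, extendByEnds_succ] using hf 0
  · rcases lt_or_eq_of_le hk with hlt | rfl
    · have := (div_lt_div_iff₀ (hg _) (hg _)).1 (hfg ⟨m, by omega⟩ ⟨m + 1, hlt⟩ (by simp))
      simp only [wronskian, extendByEnds_succ hlt, extendByEnds_succ (by omega : m < n)]
      linarith
    · simpa [wronskian, extendByEnds_succ] using hg ⟨m, by omega⟩

end TensorMarkov

open TensorMarkov in
/-- Tridiagonal inverse for one-dimensional tensor Markov kernel matrices:
for `k(x,x') = p(x∧x') q(x∨x')` with `p, q` positive and `p/q` strictly increasing along the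
ordered design points `x_1 < ⋯ < x_n`, the kernel matrix `K` is invertible and its inverse is
the explicitly given tridiagonal matrix (with conventions `p_0 = q_{n+1} = 0`,
`p_{n+1} = q_0 = 1`). -/
theorem tensor_markov_tridiagonal_inverse (n : ℕ)
    (p q : ℝ → ℝ) (x : Fin n → ℝ)
    (hp : ∀ i, 0 < p (x i)) (hq : ∀ i, 0 < q (x i))
    (hratio : ∀ i j : Fin n, i < j → p (x i) / q (x i) < p (x j) / q (x j))
    (K : Matrix (Fin n) (Fin n) ℝ)
    (hK : K = Matrix.of fun i j => p (x (min i j)) * q (x (max i j)))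
    -- extended sequences with the conventions `p₀ = q_{n+1} = 0`, `p_{n+1} = q₀ = 1`
    (pe qe : ℕ → ℝ)
    (hpe : ∀ k : ℕ, pe k = if h : 1 ≤ k ∧ k ≤ n then p (x ⟨k - 1, by omega⟩)
      else if k = 0 then 0 else 1)
    (hqe : ∀ k : ℕ, qe k = if h : 1 ≤ k ∧ k ≤ n then q (x ⟨k - 1, by omega⟩)
      else if k = 0 then 1 else 0)
    (M : Matrix (Fin n) (Fin n) ℝ)
    (hM : M = Matrix.of fun i j : Fin n =>
      if i = j then
        (pe (i.1 + 2) * qe i.1 - pe i.1 * qe (i.1 + 2)) /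
          ((pe (i.1 + 1) * qe i.1 - pe i.1 * qe (i.1 + 1)) *
           (pe (i.1 + 2) * qe (i.1 + 1) - pe (i.1 + 1) * qe (i.1 + 2)))
      else if i.1 + 1 = j.1 ∨ j.1 + 1 = i.1 then
        -1 / (pe (min i.1 j.1 + 2) * qe (min i.1 j.1 + 1) -
              pe (min i.1 j.1 + 1) * qe (min i.1 j.1 + 2))
      else 0) :
    IsUnit K.det ∧ K⁻¹ = M := by
  have hpe' : pe = extendByEnds 0 1 (fun i => p (x i)) := funext hpe
  have hqe' : qe = extendByEnds 1 0 (fun i => q (x i)) := funext hqe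
  have hK' : K = Matrix.of fun i j : Fin n => kernel pe qe (i + 1) (j + 1) := by
    simp only [hK, hpe', hqe', kernel_extendByEnds]
  have hM' : M = Matrix.of fun i j : Fin n => tridiag pe qe i j := by
    simp only [hM, tridiag, Fin.val_inj]
    rfl
  have hKM : K * M = 1 := by
    rw [hK', hM', hpe', hqe']
    exact kernelMatrix_mul_tridiagMatrix extendByEnds_zero extendByEnds_last
      fun k hk => (wronskian_extendByEnds_pos hp hq hratio hk).ne'
  exact ⟨Matrix.isUnit_det_of_right_inverse hKM, Matrix.inv_eq_right_inv hKM⟩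
end

section
/- Lower bound for full-grid optimization of H¹ functions in one dimension: for each level τ ≥ 1, define the hat function f_τ(x) = 2^{-(τ+1)/2}·max{0, 1 − |x − 0.5 + 2^{-τ-1}|/2^{-τ-1}} on (0,1). Then f_τ vanishes at every grid point i·2^{-τ} (1 ≤ i ≤ 2^τ − 1), its maximum over (0,1) equals 2^{-(τ+1)/2}, and the L² norm of its weak derivative satisfies ‖f_τ'‖_2² = 2. -/
/-!
The hat function is `√h · tent` for the tent of half-width `h = 2^{-(τ+1)}` centred at the
midpoint `1/2 - h` of a grid cell, so every grid point lies at an odd multiple of `h` from the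
centre, outside the open support. Away from three points the tent is locally either `0` or
`1 - |x - m| / h`, so its derivative has square `h⁻²` on an interval of length `2h`, and the
scaling `√h` turns `2 / h` into `2`.
-/

open MeasureTheory Set Filter Topology

noncomputable section

variable {m h x : ℝ}

def tent (m h x : ℝ) : ℝ := max 0 (1 - |x - m| / h)

def tentDeriv (m h : ℝ) : ℝ → ℝ :=
  (Metric.ball m h).indicator fun x => -SignType.sign (x - m) / h

lemma tent_eq_zero_of_le_abs (hh : 0 < h) (hx : h ≤ |x - m|) : tent m h x = 0 :=
  max_eq_left (by rwa [sub_nonpos, one_le_div hh])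

lemma tent_eq_of_abs_lt (hh : 0 < h) (hx : |x - m| < h) : tent m h x = 1 - |x - m| / h :=
  max_eq_right (by rw [sub_nonneg, div_le_one hh]; exact hx.le)

lemma tent_add_int_mul_eq_zero (hh : 0 < h) {j : ℤ} (hj : j ≠ 0) :
    tent m h (m + j * h) = 0 := by
  refine tent_eq_zero_of_le_abs hh ?_
  rw [add_sub_cancel_left, abs_mul, abs_of_pos hh]
  exact le_mul_of_one_le_left hh.le (by exact_mod_cast Int.one_le_abs hj)

lemma tent_le_one (hh : 0 ≤ h) (x : ℝ) : tent m h x ≤ 1 :=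
  max_le zero_le_one (sub_le_self _ (div_nonneg (abs_nonneg _) hh))

lemma tent_self : tent m h m = 1 := by simp [tent]

lemma hasDerivAt_tent (hh : 0 < h) (hxm : x ≠ m) (hxh : |x - m| ≠ h) :
    HasDerivAt (tent m h) (tentDeriv m h x) x := by
  have hcont : Continuous fun y => |y - m| := by fun_prop
  rcases hxh.lt_or_gt with hlt | hgt
  · have hloc : (fun y => 1 - |y - m| / h) =ᶠ[𝓝 x] tent m h :=
      (hcont.continuousAt.eventually_lt continuousAt_const hlt).mono
        fun y hy => (tent_eq_of_abs_lt hh hy).symm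
    have habs := (hasDerivAt_abs (sub_ne_zero.2 hxm)).comp x ((hasDerivAt_id x).sub_const m)
    rw [tentDeriv, indicator_of_mem (by rwa [Metric.mem_ball, Real.dist_eq]), neg_div]
    simpa using ((habs.div_const h).const_sub 1).congr_of_eventuallyEq hloc.symm
  · have hloc : (fun _ => (0 : ℝ)) =ᶠ[𝓝 x] tent m h :=
      (continuousAt_const.eventually_lt hcont.continuousAt hgt).mono
        fun y hy => (tent_eq_zero_of_le_abs hh hy.le).symm
    rw [tentDeriv, indicator_of_notMem (by rw [Metric.mem_ball, Real.dist_eq]; exact hgt.not_gt)]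
    exact (hasDerivAt_const x 0).congr_of_eventuallyEq hloc.symm

lemma ae_hasDerivAt_tent (hh : 0 < h) : ∀ᵐ x, HasDerivAt (tent m h) (tentDeriv m h x) x := by
  filter_upwards [(toFinite {m, m - h, m + h}).countable.ae_notMem volume] with x hx
  simp only [mem_insert_iff, mem_singleton_iff, not_or] at hx
  obtain ⟨hxm, hxl, hxr⟩ := hx
  refine hasDerivAt_tent hh hxm fun habs => ?_
  rcases (abs_eq hh.le).1 habs with h' | h' <;> [exact hxr (by linarith); exact hxl (by linarith)]

lemma tentDeriv_sq (hxm : x ≠ m) :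
    tentDeriv m h x ^ 2 = (Metric.ball m h).indicator (fun _ => (h ^ 2)⁻¹) x := by
  have hsign : (SignType.sign (x - m) : ℝ) ^ 2 = 1 := by
    rcases (sub_ne_zero.2 hxm).lt_or_gt with hx | hx <;> simp [hx]
  by_cases hx : x ∈ Metric.ball m h
  · rw [tentDeriv, indicator_of_mem hx, indicator_of_mem hx, div_pow, neg_sq, hsign, one_div]
  · simp [tentDeriv, hx]

lemma setIntegral_tentDeriv_sq (hh : 0 < h) {s : Set ℝ}
    (hsub : Metric.ball m h ⊆ s) : ∫ x in s, tentDeriv m h x ^ 2 = 2 / h := by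
  have hae : ∀ᵐ x ∂volume.restrict s, x ≠ m :=
    ae_restrict_of_ae ((countable_singleton m).ae_notMem volume)
  calc ∫ x in s, tentDeriv m h x ^ 2
      = ∫ x in s, (Metric.ball m h).indicator (fun _ => (h ^ 2)⁻¹) x :=
        integral_congr_ae (hae.mono fun x hx => tentDeriv_sq hx)
    _ = volume.real (Metric.ball m h) * (h ^ 2)⁻¹ := by
        rw [integral_indicator Metric.isOpen_ball.measurableSet,
          Measure.restrict_restrict Metric.isOpen_ball.measurableSet, inter_eq_left.2 hsub,
          setIntegral_const, smul_eq_mul]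
    _ = 2 / h := by
        rw [Real.volume_real_ball hh.le]
        field_simp

end

/-- The hat function `f_τ(x) = 2^{-(τ+1)/2} max{0, 1 − |x − 0.5 + 2^{-τ-1}|/2^{-τ-1}}`
vanishes at every full-grid point `i·2^{-τ}`, attains maximum `2^{-(τ+1)/2}` over `(0,1)`,
and its weak derivative satisfies `‖f_τ'‖₂² = 2`. -/
theorem full_grid_lower_bound_hat_function (τ : ℕ) (hτ : 1 ≤ τ)
    (f : ℝ → ℝ)
    (hf : f = fun x : ℝ =>
      Real.sqrt (((2 : ℝ) ^ (τ + 1))⁻¹) *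
        max 0 (1 - |x - 0.5 + ((2 : ℝ) ^ (τ + 1))⁻¹| / ((2 : ℝ) ^ (τ + 1))⁻¹)) :
    (∀ i : ℕ, 1 ≤ i → i ≤ 2 ^ τ - 1 → f ((i : ℝ) / 2 ^ τ) = 0) ∧
    ((∀ x ∈ Ioo (0 : ℝ) 1, f x ≤ Real.sqrt (((2 : ℝ) ^ (τ + 1))⁻¹)) ∧
      f (0.5 - ((2 : ℝ) ^ (τ + 1))⁻¹) = Real.sqrt (((2 : ℝ) ^ (τ + 1))⁻¹)) ∧
    (∃ f' : ℝ → ℝ,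
      (∀ᵐ x ∂(volume.restrict (Ioo (0 : ℝ) 1)), HasDerivAt f (f' x) x) ∧
      ∫ x in Ioo (0 : ℝ) 1, (f' x) ^ 2 = 2) := by
  obtain ⟨k, rfl⟩ : ∃ k, τ = k + 1 := ⟨τ - 1, by omega⟩
  set h : ℝ := ((2 : ℝ) ^ (k + 1 + 1))⁻¹ with h_def
  have hh : 0 < h := by positivity
  obtain rfl : f = fun x => √h * tent (0.5 - h) h x := by
    rw [hf]; funext x; rw [tent, sub_add]
  have hgrid (i : ℕ) :
      (i : ℝ) / 2 ^ (k + 1) = 0.5 - h + ((2 * ((i : ℤ) - 2 ^ k) + 1 : ℤ) : ℝ) * h := by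
    rw [h_def]; push_cast; field_simp; ring
  have hball : Metric.ball (0.5 - h) h ⊆ Ioo 0 1 := by
    have : h ≤ 4⁻¹ := inv_anti₀ (by norm_num) (by
      rw [pow_succ, pow_succ]; nlinarith [one_le_pow₀ (M₀ := ℝ) (n := k) one_le_two])
    rw [Real.ball_eq_Ioo]; exact Ioo_subset_Ioo (by linarith) (by linarith)
  refine ⟨fun i _ _ => ?_, ⟨fun x _ => ?_, by simp only [tent_self, mul_one]⟩,
    ⟨fun x => √h * tentDeriv (0.5 - h) h x, ?_, ?_⟩⟩
  · have hodd : 2 * ((i : ℤ) - 2 ^ k) + 1 ≠ 0 := by omega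
    simp only [hgrid, tent_add_int_mul_eq_zero hh hodd, mul_zero]
  · exact mul_le_of_le_one_right (Real.sqrt_nonneg h) (tent_le_one hh.le x)
  · exact ae_restrict_of_ae ((ae_hasDerivAt_tent hh).mono fun x hx => hx.const_mul _)
  · simp_rw [mul_pow, Real.sq_sqrt hh.le]
    rw [integral_const_mul, setIntegral_tentDeriv_sq hh hball]
    field_simp
end
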